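/- Let m > 0, set δ = min(1, 2/m), and let g : (0, r₀] → ℝ be continuous with |g(r)| ≤ r^δ for all r ∈ (0, r₀]. Define ŵ(r) = ∫₀^r s^{1/m − 1} (∫₀^s m^{1/m − 1} g(t) dt) ds. Then both iterated integrals converge, ŵ is twice continuously differentiable on (0, r₀], and there is a constant C₃ depending only on m such that |ŵ(r)| ≤ C₃ r^δ · (m/(1+m)) m^{1/m} r^{(1+m)/m}, |ŵ'(r)| ≤ C₃ r^δ · (m r)^{1/m}, and |ŵ''(r)| ≤ C₃ r^δ · (m r)^{1/m − 1} for all r ∈ (0, r₀]. -/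

import Mathlib

/-!
With `f = m^(1/m-1) g` we have `|f t| ≤ C t^δ`, and integrating power bounds from `0` gives
`|∫₀ˢ f| ≤ C s^(δ+1)/(δ+1)`. Hence `ŵ' = s^(1/m-1) ∫₀ˢ f = O(s^(1/m+δ))`, `ŵ = O(r^(1/m+δ+1))` and
`ŵ'' = (1/m-1) s^(1/m-2) ∫₀ˢ f + s^(1/m-1) f = O(s^(1/m+δ-1))`; all integrals converge at `0`
because `δ > -1`. Up to constants depending on `m`, these three powers are exactly
`r^δ h`, `r^δ h_r` and `r^δ (mr)^(1/m-1)`.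
-/

open MeasureTheory Set Filter Topology

section Calculus

variable {𝕜 F : Type*} [NontriviallyNormedField 𝕜] [NormedAddCommGroup F] [NormedSpace 𝕜 F]
  {f f' f'' : 𝕜 → F} {s : Set 𝕜}

theorem derivWithin_derivWithin_of_hasDerivWithinAt (hs : UniqueDiffOn 𝕜 s)
    (hf : ∀ x ∈ s, HasDerivWithinAt f (f' x) s x) (hf' : ∀ x ∈ s, HasDerivWithinAt f' (f'' x) s x)
    {x : 𝕜} (hx : x ∈ s) : derivWithin (derivWithin f s) s x = f'' x := by
  rw [derivWithin_congr (fun y hy => (hf y hy).derivWithin (hs y hy))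
    ((hf x hx).derivWithin (hs x hx))]
  exact (hf' x hx).derivWithin (hs x hx)

theorem contDiffOn_two_of_hasDerivWithinAt (hs : UniqueDiffOn 𝕜 s)
    (hf : ∀ x ∈ s, HasDerivWithinAt f (f' x) s x) (hf' : ∀ x ∈ s, HasDerivWithinAt f' (f'' x) s x)
    (hf'' : ContinuousOn f'' s) : ContDiffOn 𝕜 2 f s := by
  rw [show (2 : WithTop ℕ∞) = 1 + 1 from rfl, contDiffOn_succ_iff_derivWithin hs]
  refine ⟨fun x hx => (hf x hx).differentiableWithinAt, by simp, ?_⟩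
  refine ContDiffOn.congr ?_ fun x hx => (hf x hx).derivWithin (hs x hx)
  exact (contDiffOn_one_iff_derivWithin hs).2 ⟨fun x hx => (hf' x hx).differentiableWithinAt,
    hf''.congr fun x hx => (hf' x hx).derivWithin (hs x hx)⟩

end Calculus

theorem hasDerivWithinAt_integral_Ioc_zero {E : Type*} [NormedAddCommGroup E] [NormedSpace ℝ E]
    [CompleteSpace E] {f : ℝ → E} {r₀ b : ℝ} (hf_int : IntegrableOn f (Ioc 0 r₀))
    (hf : ContinuousOn f (Ioc 0 r₀)) (hb : b ∈ Ioc 0 r₀) :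
    HasDerivWithinAt (fun u => ∫ t in Ioc 0 u, f t) (f b) (Ioc 0 r₀) b := by
  -- FTC is available within `Icc`, and `Icc (b / 2) r₀` is a neighbourhood of `b` in `Ioc 0 r₀`.
  have hb' : b ∈ Icc (b / 2) r₀ := ⟨by linarith [hb.1], hb.2⟩
  have hIcc : Icc (b / 2) r₀ ⊆ Ioc 0 r₀ := Icc_subset_Ioc (by linarith [hb.1]) le_rfl
  have : Fact (b ∈ Icc (b / 2) r₀) := ⟨hb'⟩
  have hFTC : HasDerivWithinAt (fun u => ∫ t in (0)..u, f t) (f b) (Icc (b / 2) r₀) b :=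
    intervalIntegral.integral_hasDerivWithinAt_right
      ((intervalIntegrable_iff_integrableOn_Ioc_of_le hb.1.le).2
        (hf_int.mono_set (Ioc_subset_Ioc_right hb.2)))
      ((hf.mono hIcc).stronglyMeasurableAtFilter_nhdsWithin measurableSet_Icc b)
      (hf.mono hIcc b hb')
  have hnhds : Icc (b / 2) r₀ ∈ 𝓝[Ioc 0 r₀] b :=
    mem_nhdsWithin.2 ⟨Ioi (b / 2), isOpen_Ioi, show b / 2 < b by linarith [hb.1],
      fun x hx => ⟨hx.1.le, hx.2.2⟩⟩
  exact (hFTC.mono_of_mem_nhdsWithin hnhds).congr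
    (fun u hu => (intervalIntegral.integral_of_le hu.1.le).symm)
    (intervalIntegral.integral_of_le hb.1.le).symm

section RpowBound

variable {f : ℝ → ℝ} {C p r : ℝ}

theorem integrableOn_Ioc_zero_of_abs_le_rpow (hp : -1 < p) (hf : ContinuousOn f (Ioc 0 r))
    (hfC : ∀ t ∈ Ioc 0 r, |f t| ≤ C * t ^ p) : IntegrableOn f (Ioc 0 r) :=
  ((intervalIntegral.intervalIntegrable_rpow' hp).const_mul C).1.mono'
    (hf.aestronglyMeasurable measurableSet_Ioc) (ae_restrict_of_forall_mem measurableSet_Ioc hfC)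

theorem abs_integral_Ioc_zero_le_rpow (hp : -1 < p) (hr : 0 ≤ r)
    (hfC : ∀ t ∈ Ioc 0 r, |f t| ≤ C * t ^ p) :
    |∫ t in Ioc 0 r, f t| ≤ C / (p + 1) * r ^ (p + 1) :=
  calc |∫ t in Ioc 0 r, f t| ≤ ∫ t in Ioc 0 r, C * t ^ p :=
        (Real.norm_eq_abs _).symm.trans_le <| norm_integral_le_of_norm_le
          ((intervalIntegral.intervalIntegrable_rpow' hp).const_mul C).1
          (ae_restrict_of_forall_mem measurableSet_Ioc hfC)
    _ = C / (p + 1) * r ^ (p + 1) := by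
        rw [← intervalIntegral.integral_of_le hr, intervalIntegral.integral_const_mul,
          integral_rpow (Or.inl hp), Real.zero_rpow (by linarith)]
        ring

end RpowBound

section WeightedPrimitive

variable {f : ℝ → ℝ} {k p C r₀ s : ℝ}

theorem abs_rpow_mul_integral_Ioc_zero_le (hp : -1 < p)
    (hfC : ∀ t ∈ Ioc 0 r₀, |f t| ≤ C * t ^ p) (hs : s ∈ Ioc 0 r₀) :
    |s ^ k * ∫ t in Ioc 0 s, f t| ≤ C / (p + 1) * s ^ (k + p + 1) := by
  rw [abs_mul, abs_of_pos (Real.rpow_pos_of_pos hs.1 k), add_assoc, Real.rpow_add hs.1,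
    mul_left_comm]
  exact mul_le_mul_of_nonneg_left
    (abs_integral_Ioc_zero_le_rpow hp hs.1.le fun t ht => hfC t (Ioc_subset_Ioc_right hs.2 ht))
    (Real.rpow_pos_of_pos hs.1 k).le

theorem hasDerivWithinAt_rpow_mul_integral_Ioc_zero (hf_int : IntegrableOn f (Ioc 0 r₀))
    (hf : ContinuousOn f (Ioc 0 r₀)) (hs : s ∈ Ioc 0 r₀) :
    HasDerivWithinAt (fun s => s ^ k * ∫ t in Ioc 0 s, f t)
      (k * s ^ (k - 1) * (∫ t in Ioc 0 s, f t) + s ^ k * f s) (Ioc 0 r₀) s :=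
  (Real.hasDerivAt_rpow_const (Or.inl hs.1.ne')).hasDerivWithinAt.mul
    (hasDerivWithinAt_integral_Ioc_zero hf_int hf hs)

theorem continuousOn_deriv_rpow_mul_integral_Ioc_zero (hf_int : IntegrableOn f (Ioc 0 r₀))
    (hf : ContinuousOn f (Ioc 0 r₀)) :
    ContinuousOn (fun s => k * s ^ (k - 1) * (∫ t in Ioc 0 s, f t) + s ^ k * f s)
      (Ioc 0 r₀) := by
  have hF : ContinuousOn (fun s => ∫ t in Ioc 0 s, f t) (Ioc 0 r₀) := fun s hs =>
    (hasDerivWithinAt_integral_Ioc_zero hf_int hf hs).continuousWithinAt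
  have hpow (q : ℝ) : ContinuousOn (fun s : ℝ => s ^ q) (Ioc 0 r₀) :=
    continuousOn_id.rpow_const fun s hs => Or.inl hs.1.ne'
  exact ((continuousOn_const.mul (hpow _)).mul hF).add ((hpow k).mul hf)

theorem abs_deriv_rpow_mul_integral_Ioc_zero_le (hp : -1 < p)
    (hfC : ∀ t ∈ Ioc 0 r₀, |f t| ≤ C * t ^ p) (hs : s ∈ Ioc 0 r₀) :
    |k * s ^ (k - 1) * (∫ t in Ioc 0 s, f t) + s ^ k * f s| ≤
      (|k| * (C / (p + 1)) + C) * s ^ (k + p) := by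
  have hs₀ := hs.1
  have hF := abs_integral_Ioc_zero_le_rpow hp hs₀.le fun t ht =>
    hfC t (Ioc_subset_Ioc_right hs.2 ht)
  calc _ ≤ |k| * s ^ (k - 1) * |∫ t in Ioc 0 s, f t| + s ^ k * |f s| := by
        refine (abs_add_le _ _).trans_eq ?_
        rw [abs_mul, abs_mul, abs_mul, abs_of_pos (Real.rpow_pos_of_pos hs₀ _),
          abs_of_pos (Real.rpow_pos_of_pos hs₀ _)]
    _ ≤ |k| * s ^ (k - 1) * (C / (p + 1) * s ^ (p + 1)) + s ^ k * (C * s ^ p) := by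
        gcongr
        exact hfC s hs
    _ = |k| * (C / (p + 1)) * (s ^ (k - 1) * s ^ (p + 1)) + C * (s ^ k * s ^ p) := by ring
    _ = _ := by
        rw [← Real.rpow_add hs₀, ← Real.rpow_add hs₀, sub_add_add_cancel]
        ring

end WeightedPrimitive

theorem exists_pos_weighted_bounds_of_rpow_bounds {m δ r₀ A B D : ℝ} (hm : 0 < m)
    {u v w : ℝ → ℝ}
    (hu : ∀ r ∈ Ioc 0 r₀, |u r| ≤ A * r ^ (1 / m - 1 + δ + 1 + 1))
    (hv : ∀ r ∈ Ioc 0 r₀, |v r| ≤ B * r ^ (1 / m - 1 + δ + 1))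
    (hw : ∀ r ∈ Ioc 0 r₀, |w r| ≤ D * r ^ (1 / m - 1 + δ)) :
    ∃ C₃ > 0, ∀ r ∈ Ioc 0 r₀,
      |u r| ≤ C₃ * r ^ δ * ((m / (1 + m)) * m ^ (1 / m) * r ^ ((1 + m) / m)) ∧
      |v r| ≤ C₃ * r ^ δ * (m * r) ^ (1 / m) ∧
      |w r| ≤ C₃ * r ^ δ * (m * r) ^ (1 / m - 1) := by
  have ha : 0 < m / (1 + m) * m ^ (1 / m) := by positivity
  obtain ⟨C₃, hC₃, hA, hB, hD⟩ : ∃ C₃ > 0, A ≤ C₃ * (m / (1 + m) * m ^ (1 / m)) ∧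
      B ≤ C₃ * m ^ (1 / m) ∧ D ≤ C₃ * m ^ (1 / m - 1) :=
    ((eventually_gt_atTop 0).and <|
      ((tendsto_id.atTop_mul_const ha).eventually_ge_atTop A).and <|
      ((tendsto_id.atTop_mul_const (by positivity)).eventually_ge_atTop B).and
      ((tendsto_id.atTop_mul_const (by positivity)).eventually_ge_atTop D)).exists
  refine ⟨C₃, hC₃, fun r hr => ?_⟩
  have hr_pos := hr.1
  have le_weight {x K a W e : ℝ} (hx : x ≤ K * r ^ e) (hK : K ≤ C₃ * a)
      (hW : r ^ δ * W = a * r ^ e) :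
      x ≤ C₃ * r ^ δ * W := by
    rw [mul_assoc, hW, ← mul_assoc]
    exact hx.trans (mul_le_mul_of_nonneg_right hK (Real.rpow_nonneg hr_pos.le e))
  refine ⟨le_weight (hu r hr) hA ?_, le_weight (hv r hr) hB ?_, le_weight (hw r hr) hD ?_⟩
  · rw [show 1 / m - 1 + δ + 1 + 1 = δ + (1 + m) / m by field_simp; ring, Real.rpow_add hr_pos]
    ring
  · rw [Real.mul_rpow hm.le hr_pos.le, show 1 / m - 1 + δ + 1 = δ + 1 / m by ring,
      Real.rpow_add hr_pos]
    ring
  · rw [Real.mul_rpow hm.le hr_pos.le, show 1 / m - 1 + δ = δ + (1 / m - 1) by ring,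
      Real.rpow_add hr_pos]
    ring

theorem weighted_double_integral_bound_general (m : ℝ) (hm : 0 < m) (δ : ℝ) (hδ : δ = min 1 (2 / m))
    (r₀ : ℝ) (g : ℝ → ℝ) (hg_cont : ContinuousOn g (Set.Ioc 0 r₀))
    (hg : ∀ r ∈ Set.Ioc (0 : ℝ) r₀, |g r| ≤ r ^ δ)
    (w : ℝ → ℝ)
    (hw : ∀ r : ℝ, w r =
      ∫ s in Set.Ioc (0 : ℝ) r, s ^ (1 / m - 1) * ∫ t in Set.Ioc (0 : ℝ) s, m ^ (1 / m - 1) * g t) :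
    (∀ s ∈ Set.Ioc (0 : ℝ) r₀,
      IntegrableOn (fun t => m ^ (1 / m - 1) * g t) (Set.Ioc 0 s)) ∧
    (∀ r ∈ Set.Ioc (0 : ℝ) r₀,
      IntegrableOn (fun s => s ^ (1 / m - 1) * ∫ t in Set.Ioc (0 : ℝ) s, m ^ (1 / m - 1) * g t)
        (Set.Ioc 0 r)) ∧
    ContDiffOn ℝ 2 w (Set.Ioc 0 r₀) ∧
    ∃ C₃ > 0, ∀ r ∈ Set.Ioc (0 : ℝ) r₀,
      |w r| ≤ C₃ * r ^ δ * ((m / (1 + m)) * m ^ (1 / m) * r ^ ((1 + m) / m)) ∧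
      |derivWithin w (Set.Ioc 0 r₀) r| ≤ C₃ * r ^ δ * (m * r) ^ (1 / m) ∧
      |derivWithin (derivWithin w (Set.Ioc 0 r₀)) (Set.Ioc 0 r₀) r|
        ≤ C₃ * r ^ δ * (m * r) ^ (1 / m - 1) := by
  obtain rfl : w = _ := funext hw
  set c := m ^ (1 / m - 1)
  have hc : 0 < c := Real.rpow_pos_of_pos hm _
  have hp : -1 < δ := hδ ▸ neg_one_lt_zero.trans (lt_min one_pos (by positivity))
  have hkp : -1 < 1 / m - 1 + δ + 1 := by linarith [one_div_pos.2 hm]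
  have hf : ContinuousOn (fun t => c * g t) (Ioc 0 r₀) := continuousOn_const.mul hg_cont
  have hfC (t : ℝ) (ht : t ∈ Ioc 0 r₀) : |c * g t| ≤ c * t ^ δ := by
    rw [abs_mul, abs_of_pos hc]
    exact mul_le_mul_of_nonneg_left (hg t ht) hc.le
  have hf_int := integrableOn_Ioc_zero_of_abs_le_rpow hp hf hfC
  have hH' (s : ℝ) (hs : s ∈ Ioc 0 r₀) :=
    hasDerivWithinAt_rpow_mul_integral_Ioc_zero (k := 1 / m - 1) hf_int hf hs
  have hH_int := integrableOn_Ioc_zero_of_abs_le_rpow hkp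
    (fun s hs => (hH' s hs).continuousWithinAt)
    fun s hs => abs_rpow_mul_integral_Ioc_zero_le hp hfC hs
  have hw' (r : ℝ) (hr : r ∈ Ioc 0 r₀) := hasDerivWithinAt_integral_Ioc_zero hH_int
    (fun s hs => (hH' s hs).continuousWithinAt) hr
  have hS := uniqueDiffOn_Ioc 0 r₀
  refine ⟨fun s hs => hf_int.mono_set (Ioc_subset_Ioc_right hs.2),
    fun r hr => hH_int.mono_set (Ioc_subset_Ioc_right hr.2),
    contDiffOn_two_of_hasDerivWithinAt hS hw' hH'
      (continuousOn_deriv_rpow_mul_integral_Ioc_zero hf_int hf),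
    exists_pos_weighted_bounds_of_rpow_bounds hm
      (fun r hr => abs_integral_Ioc_zero_le_rpow hkp hr.1.le fun s hs =>
        abs_rpow_mul_integral_Ioc_zero_le hp hfC (Ioc_subset_Ioc_right hr.2 hs))
      (fun r hr => by
        rw [(hw' r hr).derivWithin (hS r hr)]
        exact abs_rpow_mul_integral_Ioc_zero_le hp hfC hr)
      fun r hr => by
        rw [derivWithin_derivWithin_of_hasDerivWithinAt hS hw' hH' hr]
        exact abs_deriv_rpow_mul_integral_Ioc_zero_le hp hfC hr⟩

/-- Lemma 6.4: for `m > 0`, `δ = min(1, 2/m)`, and `|g(r)| ≤ r^δ` on `(0, r₀]`, the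
function `ŵ(r) = ∫₀^r s^(1/m-1) (∫₀^s m^(1/m-1) g(t) dt) ds` is well defined (both
iterated integrals converge), is `C²` on `(0, r₀]`, and satisfies the weighted bounds
`|ŵ| ≤ C₃ r^δ h(r)`, `|ŵ'| ≤ C₃ r^δ (mr)^(1/m)`, `|ŵ''| ≤ C₃ r^δ (mr)^(1/m-1)`
with `C₃` depending only on `m`. -/
theorem weighted_double_integral_bound (m : ℝ) (hm : 0 < m) (δ : ℝ) (hδ : δ = min 1 (2 / m))
    (r₀ : ℝ) (hr₀ : 0 < r₀) (g : ℝ → ℝ) (hg_cont : ContinuousOn g (Set.Ioc 0 r₀))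
    (hg : ∀ r ∈ Set.Ioc (0 : ℝ) r₀, |g r| ≤ r ^ δ)
    (w : ℝ → ℝ)
    (hw : ∀ r : ℝ, w r =
      ∫ s in Set.Ioc (0 : ℝ) r, s ^ (1 / m - 1) * ∫ t in Set.Ioc (0 : ℝ) s, m ^ (1 / m - 1) * g t) :
    (∀ s ∈ Set.Ioc (0 : ℝ) r₀,
      IntegrableOn (fun t => m ^ (1 / m - 1) * g t) (Set.Ioc 0 s)) ∧
    (∀ r ∈ Set.Ioc (0 : ℝ) r₀,
      IntegrableOn (fun s => s ^ (1 / m - 1) * ∫ t in Set.Ioc (0 : ℝ) s, m ^ (1 / m - 1) * g t)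
        (Set.Ioc 0 r)) ∧
    ContDiffOn ℝ 2 w (Set.Ioc 0 r₀) ∧
    ∃ C₃ > 0, ∀ r ∈ Set.Ioc (0 : ℝ) r₀,
      |w r| ≤ C₃ * r ^ δ * ((m / (1 + m)) * m ^ (1 / m) * r ^ ((1 + m) / m)) ∧
      |derivWithin w (Set.Ioc 0 r₀) r| ≤ C₃ * r ^ δ * (m * r) ^ (1 / m) ∧
      |derivWithin (derivWithin w (Set.Ioc 0 r₀)) (Set.Ioc 0 r₀) r|
        ≤ C₃ * r ^ δ * (m * r) ^ (1 / m - 1) :=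
  weighted_double_integral_bound_general m hm δ hδ r₀ g hg_cont hg w hw
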